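/- Let 𝔤 = ⊕_{γ∈Γ} 𝔤_γ be a Γ-graded Lie algebra over ℚ with Γ a free abelian group of finite rank, let (Z, a) be stability data with quadratic form Q, and let V ⊂ ℝ² ≅ ℂ be a strict sector (a convex cone not containing any straight line). Then the set Γ_V = {γ ∈ Γ \ {0} : Z(γ) ∈ V, Q(γ) ≥ 0} has the property that for any γ ∈ Γ_V, the number of ways to write γ = γ₁ + γ₂ with γ₁, γ₂ ∈ Γ_V is finite; consequently ⊕_{γ∈Γ_V} 𝔤_γ carries a well-defined pronilpotent Lie algebra structure after completion. -/

import Mathlib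

/-!
The support property makes `‖γ‖` comparable to `|Z γ|` on `{Q ≥ 0}`: by homogeneity it suffices
to bound `|Z|` from below on the compact set `{‖x‖ = 1, Q x ≥ 0}`, where `Z` does not vanish
because `Q < 0` on `ker Z \ {0}`. A strict sector lies in an open half-plane, so after a rotation
`Re` dominates a fixed multiple of the norm on it; hence in a decomposition `Z γ = Z γ₁ + Z γ₂`
with both summands in the sector, `|Z γ₁| ≤ C |Z γ|`. So `γ₁` ranges over a bounded set of lattice
points, and `γ₂ = γ - γ₁` is determined by `γ₁`.
-/

open Complex

/-- The strict sector `V = {r e^{iθ} : r > 0, θ₁ < θ < θ₂}` in `ℂ`. -/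
def strictSector (θ₁ θ₂ : ℝ) : Set ℂ :=
  {w : ℂ | ∃ (r θ : ℝ), 0 < r ∧ θ₁ < θ ∧ θ < θ₂ ∧
    w = (r : ℂ) * Complex.exp ((θ : ℂ) * Complex.I)}

-- The norm on `ℤ` is defined as the norm of the cast to `ℝ`.
theorem pi_norm_intCast {ι : Type*} [Fintype ι] (γ : ι → ℤ) :
    ‖fun t => (γ t : ℝ)‖ = ‖γ‖ :=
  rfl

theorem QuadraticMap.continuous_of_finiteDimensional {E : Type*} [NormedAddCommGroup E]
    [NormedSpace ℝ E] [FiniteDimensional ℝ E] (Q : QuadraticForm ℝ E) : Continuous Q := by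
  have hB : Continuous fun x : E => (QuadraticMap.associated Q).toContinuousBilinearMap x x := by
    fun_prop
  simpa [QuadraticMap.associated_eq_self_apply] using hB

theorem LinearMap.exists_pos_mul_norm_le_norm_of_nonneg_quadratic {E F : Type*}
    [NormedAddCommGroup E] [NormedSpace ℝ E] [FiniteDimensional ℝ E] [NormedAddCommGroup F]
    [NormedSpace ℝ F] (f : E →ₗ[ℝ] F) (Q : QuadraticForm ℝ E)
    (hQ : ∀ x, f x = 0 → x ≠ 0 → Q x < 0) :
    ∃ m > 0, ∀ x, 0 ≤ Q x → m * ‖x‖ ≤ ‖f x‖ := by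
  set S := Metric.sphere (0 : E) 1 ∩ {x | 0 ≤ Q x}
  have hS : IsCompact S := (isCompact_sphere 0 1).inter_right
    (isClosed_le continuous_const Q.continuous_of_finiteDimensional)
  have hfS : ∀ x ∈ S, 0 < ‖f x‖ := fun x ⟨hx1, hxQ⟩ => norm_pos_iff.2 fun hfx =>
    (hQ x hfx (ne_zero_of_mem_unit_sphere ⟨x, hx1⟩)).not_ge hxQ
  obtain ⟨m, hm, hmS⟩ := hS.exists_forall_le'
    (f.continuous_of_finiteDimensional.norm.continuousOn) hfS
  refine ⟨m, hm, fun x hx => ?_⟩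
  rcases eq_or_ne x 0 with rfl | hx0
  · simp
  have hn : 0 < ‖x‖ := norm_pos_iff.2 hx0
  have hxS : ‖x‖⁻¹ • x ∈ S := by
    refine ⟨by simp [norm_smul, hn.ne'], ?_⟩
    simp only [Set.mem_ofPred_eq, QuadraticMap.map_smul, smul_eq_mul]
    positivity
  have hmx := hmS _ hxS
  rwa [map_smul, norm_smul, norm_inv, norm_norm, ← div_eq_inv_mul, le_div_iff₀ hn] at hmx

theorem exists_pos_mul_norm_le_re_of_mem_strictSector {θ₁ θ₂ : ℝ} (hθ : θ₂ - θ₁ < Real.pi) :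
    ∃ c > 0, ∃ u : ℂ, ‖u‖ = 1 ∧ ∀ w ∈ strictSector θ₁ θ₂, c * ‖w‖ ≤ (u * w).re := by
  rcases le_or_gt θ₂ θ₁ with hle | hlt
  · exact ⟨1, one_pos, 1, norm_one, fun w ⟨_, _, _, h₁, h₂, _⟩ => absurd (h₁.trans h₂) hle.not_gt⟩
  set φ := (θ₁ + θ₂) / 2 with hφ
  refine ⟨Real.cos ((θ₂ - θ₁) / 2), Real.cos_pos_of_mem_Ioo ⟨by linarith, by linarith⟩,
    exp (↑(-φ) * I), norm_exp_ofReal_mul_I _, ?_⟩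
  rintro _ ⟨r, θ, hr, h₁, h₂, rfl⟩
  have hrot : exp (↑(-φ) * I) * (r * exp (θ * I)) = r * exp (↑(θ - φ) * I) := by
    rw [mul_left_comm, ← Complex.exp_add]
    push_cast
    ring_nf
  have hcos : Real.cos ((θ₂ - θ₁) / 2) ≤ Real.cos (θ - φ) := by
    rw [← Real.cos_abs (θ - φ)]
    apply Real.cos_le_cos_of_nonneg_of_le_pi (abs_nonneg _) (by linarith [Real.pi_pos])
    rw [abs_le]
    constructor <;> linarith [hφ]
  rw [hrot, re_ofReal_mul, exp_ofReal_mul_I_re, norm_mul, norm_exp_ofReal_mul_I, norm_real,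
    Real.norm_of_nonneg hr.le, mul_one, mul_comm r]
  exact mul_le_mul_of_nonneg_right hcos hr.le

theorem exists_pos_mul_norm_le_norm_add_of_mem_strictSector {θ₁ θ₂ : ℝ}
    (hθ : θ₂ - θ₁ < Real.pi) :
    ∃ c > 0, ∀ w₁ ∈ strictSector θ₁ θ₂, ∀ w₂ ∈ strictSector θ₁ θ₂, c * ‖w₁‖ ≤ ‖w₁ + w₂‖ := by
  obtain ⟨c, hc, u, hu, hV⟩ := exists_pos_mul_norm_le_re_of_mem_strictSector hθ
  refine ⟨c, hc, fun w₁ hw₁ w₂ hw₂ => ?_⟩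
  have h₂ : 0 ≤ (u * w₂).re := (mul_nonneg hc.le (norm_nonneg _)).trans (hV w₂ hw₂)
  calc c * ‖w₁‖ ≤ (u * w₁).re + (u * w₂).re := by linarith [hV w₁ hw₁]
    _ = (u * (w₁ + w₂)).re := by rw [mul_add, add_re]
    _ ≤ ‖u * (w₁ + w₂)‖ := re_le_norm _
    _ = ‖w₁ + w₂‖ := by rw [norm_mul, hu, one_mul]

/-- let `Γ = ℤ^d` with central charge `Z : Γ → ℂ` extending to the real
linear map `ZR` on `Γ ⊗ ℝ = ℝ^d`, and let `Q` be the quadratic form of the support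
property (negative on `ker(Z ⊗ ℝ) \ {0}`).  For a strict sector `V` of angular width
`< π`, the set `Γ_V = {γ ≠ 0 : Z(γ) ∈ V, Q(γ) ≥ 0}` has the property that each
`γ ∈ Γ_V` admits only finitely many decompositions `γ = γ₁ + γ₂` with `γ₁, γ₂ ∈ Γ_V`
(so that the completed Lie algebra `⊕_{γ ∈ Γ_V} 𝔤_γ` is pronilpotent). -/
theorem stmt8 (d : ℕ) (Z : (Fin d → ℤ) →+ ℂ)
    (ZR : (Fin d → ℝ) →ₗ[ℝ] ℂ)
    (hZR : ∀ γ : Fin d → ℤ, ZR (fun t => (γ t : ℝ)) = Z γ)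
    (Q : QuadraticForm ℝ (Fin d → ℝ))
    (hQ : ∀ x : Fin d → ℝ, ZR x = 0 → x ≠ 0 → Q x < 0)
    (θ₁ θ₂ : ℝ) (hθ : θ₂ - θ₁ < Real.pi) :
    ∀ γ : Fin d → ℤ,
      γ ∈ {γ' : Fin d → ℤ | γ' ≠ 0 ∧ Z γ' ∈ strictSector θ₁ θ₂ ∧
            0 ≤ Q (fun t => (γ' t : ℝ))} →
      Set.Finite {p : (Fin d → ℤ) × (Fin d → ℤ) |
        (p.1 ≠ 0 ∧ Z p.1 ∈ strictSector θ₁ θ₂ ∧ 0 ≤ Q (fun t => (p.1 t : ℝ))) ∧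
        (p.2 ≠ 0 ∧ Z p.2 ∈ strictSector θ₁ θ₂ ∧ 0 ≤ Q (fun t => (p.2 t : ℝ))) ∧
        p.1 + p.2 = γ} := by
  intro γ _
  obtain ⟨m, hm, hsupport⟩ := ZR.exists_pos_mul_norm_le_norm_of_nonneg_quadratic Q hQ
  obtain ⟨c, hc, hsector⟩ := exists_pos_mul_norm_le_norm_add_of_mem_strictSector hθ
  have hball : (Metric.closedBall (0 : Fin d → ℤ) (‖Z γ‖ / (c * m))).Finite :=
    (isCompact_closedBall _ _).finite_of_discrete
  refine (hball.image fun γ₁ => (γ₁, γ - γ₁)).subset ?_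
  rintro ⟨γ₁, γ₂⟩ ⟨⟨-, hV₁, hQ₁⟩, ⟨-, hV₂, -⟩, rfl⟩
  refine ⟨γ₁, ?_, by simp⟩
  rw [mem_closedBall_zero_iff, le_div_iff₀ (by positivity)]
  calc ‖γ₁‖ * (c * m) = c * (m * ‖fun t => (γ₁ t : ℝ)‖) := by rw [pi_norm_intCast]; ring
    _ ≤ c * ‖Z γ₁‖ := by gcongr; rw [← hZR]; exact hsupport _ hQ₁
    _ ≤ ‖Z γ₁ + Z γ₂‖ := hsector _ hV₁ _ hV₂
    _ = ‖Z (γ₁ + γ₂)‖ := by rw [map_add]
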